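/- Let F be an algebra of partial functions that is atomic and in which composition is completely left-distributive over joins. Let At(F) denote the set of atoms of F, and for each a ∈ F define the partial function θ(a) on At(F) by θ(a)(x) = x∘a if x∘a ≠ ∅, and θ(a)(x) undefined otherwise. Then θ is a complete representation of F by partial functions with base At(F): θ is injective, θ(a∘b) = θ(a)∘θ(b), θ(a ⊓ b) = θ(a) ∩ θ(b), θ(A(a)) = A(θ(a)) for all a, b ∈ F, and whenever the supremum ⨆S of a subset S ⊆ F exists in (F, ⊆), θ(⨆S) = ⋃{θ(s) : s ∈ S}. -/

import Mathlib

/-! Algebras of partial functions: basic definitions. -/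

namespace PFAlg

variable {X Y : Type*}

/-- `f ⊆ X × X` is a partial function. -/
def IsPF (f : Set (X × X)) : Prop :=
  ∀ ⦃x y z : X⦄, (x, y) ∈ f → (x, z) ∈ f → y = z

/-- Composition of partial functions (binary relations), written left-to-right:
`f ∘ g = {(x,z) : ∃ y, (x,y) ∈ f and (y,z) ∈ g}`. -/
def comp (f g : Set (X × X)) : Set (X × X) :=
  {p | ∃ y, (p.1, y) ∈ f ∧ (y, p.2) ∈ g}

/-- Antidomain: the diagonal of the set of points where `f` is undefined. -/
def adom (f : Set (X × X)) : Set (X × X) :=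
  {p | p.1 = p.2 ∧ ∀ y, (p.1, y) ∉ f}

/-- An algebra of partial functions on the base `X`: a nonempty collection of
partial functions closed under composition, intersection and antidomain. -/
structure IsPFAlgebra (F : Set (Set (X × X))) : Prop where
  nonempty : F.Nonempty
  pf : ∀ f ∈ F, IsPF f
  comp_mem : ∀ f ∈ F, ∀ g ∈ F, comp f g ∈ F
  inter_mem : ∀ f ∈ F, ∀ g ∈ F, f ∩ g ∈ F
  adom_mem : ∀ f ∈ F, adom f ∈ F

/-- `m` is the supremum of `S` in the poset `(F, ⊆)`. -/
def IsLUBIn (F S : Set (Set (X × X))) (m : Set (X × X)) : Prop :=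
  m ∈ F ∧ (∀ s ∈ S, s ⊆ m) ∧ ∀ c ∈ F, (∀ s ∈ S, s ⊆ c) → m ⊆ c

/-- `m` is the infimum of `S` in the poset `(F, ⊆)`. -/
def IsGLBIn (F S : Set (Set (X × X))) (m : Set (X × X)) : Prop :=
  m ∈ F ∧ (∀ s ∈ S, m ⊆ s) ∧ ∀ c ∈ F, (∀ s ∈ S, c ⊆ s) → c ⊆ m

/-- `b` is an atom of `F`: a minimal element of `F \ {∅}`. -/
def IsAtomOf (F : Set (Set (X × X))) (b : Set (X × X)) : Prop :=
  b ∈ F ∧ b ≠ ∅ ∧ ∀ g ∈ F, g ≠ ∅ → g ⊆ b → g = b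

/-- `F` is atomic: every nonempty member contains an atom. -/
def Atomic (F : Set (Set (X × X))) : Prop :=
  ∀ f ∈ F, f ≠ ∅ → ∃ b, IsAtomOf F b ∧ b ⊆ f

/-- A representation of `F` by partial functions over the base `Y`. -/
structure IsRep (F : Set (Set (X × X))) (θ : Set (X × X) → Set (Y × Y)) : Prop where
  injOn : Set.InjOn θ F
  pf : ∀ f ∈ F, IsPF (θ f)
  comp_eq : ∀ f ∈ F, ∀ g ∈ F, θ (comp f g) = comp (θ f) (θ g)
  inter_eq : ∀ f ∈ F, ∀ g ∈ F, θ (f ∩ g) = θ f ∩ θ g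
  adom_eq : ∀ f ∈ F, θ (adom f) = adom (θ f)

/-- `θ` is meet complete: it turns existing infima of nonempty subsets into intersections. -/
def MeetComplete (F : Set (Set (X × X))) (θ : Set (X × X) → Set (Y × Y)) : Prop :=
  ∀ S ⊆ F, S.Nonempty → ∀ m, IsGLBIn F S m → θ m = ⋂ s ∈ S, θ s

/-- `θ` is join complete: it turns existing suprema into unions. -/
def JoinComplete (F : Set (Set (X × X))) (θ : Set (X × X) → Set (Y × Y)) : Prop :=
  ∀ S ⊆ F, ∀ m, IsLUBIn F S m → θ m = ⋃ s ∈ S, θ s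

/-- `θ` is an atomic representation. -/
def AtomicRep (F : Set (Set (X × X))) (θ : Set (X × X) → Set (Y × Y)) : Prop :=
  ∀ f ∈ F, ∀ p ∈ θ f, ∃ b, IsAtomOf F b ∧ p ∈ θ b

/-- Composition in `F` is completely left-distributive over joins. -/
def CompLeftDistribJoins (F : Set (Set (X × X))) : Prop :=
  ∀ a ∈ F, ∀ S ⊆ F, ∀ m, IsLUBIn F S m → IsLUBIn F ((fun s => comp a s) '' S) (comp a m)

/-- Composition in `F` is completely left-distributive over meets. -/
def CompLeftDistribMeets (F : Set (Set (X × X))) : Prop :=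
  ∀ a ∈ F, ∀ S ⊆ F, S.Nonempty → ∀ m, IsGLBIn F S m →
    IsGLBIn F ((fun s => comp a s) '' S) (comp a m)

end PFAlg

/-!
An atom `x` composed with `a` is either empty or again an atom, so `θ(a)` is a partial function
on the atoms, and composition, intersection and antidomain transfer pointwise. Injectivity uses
the domain `A(A(c))` of an atom `c ⊆ a`, itself an atom, as a probe: `c ⊆ A(A(c)) ∘ a`.
Complete left-distributivity says `x ∘ ⨆S = ⨆ (x ∘ s)`, so `x ∘ ⨆S ≠ ∅` forces `x ∘ s ≠ ∅` for
some `s ∈ S`; this gives join completeness directly, and, applied to the supremum of the atoms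
below each `s`, the atom of `F` that witnesses meet completeness.
-/

namespace PFAlg

section Relations

variable {W : Type*} {f g h : Set (W × W)}

theorem mem_adom {p q : W} : (p, q) ∈ adom f ↔ p = q ∧ ∀ y, (p, y) ∉ f := Iff.rfl

theorem mem_adom_adom {p q : W} : (p, q) ∈ adom (adom f) ↔ p = q ∧ ∃ y, (p, y) ∈ f := by
  simp only [mem_adom, not_and, not_forall, not_not]
  constructor
  · rintro ⟨rfl, h⟩
    exact ⟨rfl, h p rfl⟩
  · rintro ⟨rfl, y, hy⟩
    exact ⟨rfl, fun _ _ => ⟨y, hy⟩⟩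

theorem comp_assoc (f g h : Set (W × W)) : comp (comp f g) h = comp f (comp g h) := by
  ext ⟨p, q⟩
  constructor
  · rintro ⟨y, ⟨w, hw, hwy⟩, hy⟩
    exact ⟨w, hw, y, hwy, hy⟩
  · rintro ⟨w, hw, y, hwy, hy⟩
    exact ⟨y, ⟨w, hw, hwy⟩, hy⟩

theorem comp_mono_right (hgh : g ⊆ h) : comp f g ⊆ comp f h :=
  fun _ ⟨y, hy, hyg⟩ => ⟨y, hy, hgh hyg⟩

theorem empty_comp (g : Set (W × W)) : comp (∅ : Set (W × W)) g = ∅ := by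
  ext
  simp [comp]

theorem comp_empty (f : Set (W × W)) : comp f (∅ : Set (W × W)) = ∅ := by
  ext
  simp [comp]

theorem comp_adom_subset (f g : Set (W × W)) : comp (adom g) f ⊆ f := by
  rintro ⟨p, q⟩ ⟨y, hy, hyf⟩
  obtain ⟨rfl, -⟩ := mem_adom.mp hy
  exact hyf

theorem comp_adom_subset_left (f g : Set (W × W)) : comp f (adom g) ⊆ f := by
  rintro ⟨p, q⟩ ⟨y, hy, hyg⟩
  obtain ⟨rfl, -⟩ := mem_adom.mp hyg
  exact hy

theorem subset_comp_adom_adom (hfg : f ⊆ g) : f ⊆ comp (adom (adom f)) g := by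
  rintro ⟨p, q⟩ hpq
  exact ⟨p, mem_adom_adom.mpr ⟨rfl, q, hpq⟩, hfg hpq⟩

theorem isPF_comp (hf : IsPF f) (hg : IsPF g) : IsPF (comp f g) := by
  rintro x y z ⟨w, hw, hwy⟩ ⟨w', hw', hwz⟩
  obtain rfl := hf hw hw'
  exact hg hwy hwz

theorem comp_adom_eq_self_iff : comp f (adom g) = f ↔ comp f g = ∅ := by
  constructor
  · intro hfg
    refine Set.eq_empty_iff_forall_notMem.mpr ?_
    rintro ⟨p, q⟩ ⟨r, hr, hrq⟩
    obtain ⟨y, hy, hyy⟩ : (p, r) ∈ comp f (adom g) := by rwa [hfg]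
    obtain ⟨rfl, hno⟩ := mem_adom.mp hyy
    exact hno q hrq
  · intro hfg
    refine (comp_adom_subset_left f g).antisymm ?_
    rintro ⟨p, q⟩ hpq
    refine ⟨q, hpq, mem_adom.mpr ⟨rfl, fun w hw => ?_⟩⟩
    have : (p, w) ∈ comp f g := ⟨q, hpq, hw⟩
    rwa [hfg] at this

theorem IsPF.comp_inter_eq_of_comp_eq (hf : IsPF f) (h_eq : comp f g = comp f h) :
    comp f (g ∩ h) = comp f g := by
  refine (comp_mono_right Set.inter_subset_left).antisymm ?_
  rintro ⟨p, q⟩ hpq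
  obtain ⟨r, hr, hrg⟩ := hpq
  obtain ⟨r', hr', hrh⟩ : (p, q) ∈ comp f h := h_eq ▸ ⟨r, hr, hrg⟩
  obtain rfl := hf hr hr'
  exact ⟨r, hr, hrg, hrh⟩

end Relations

variable {X : Type*} {F : Set (Set (X × X))} {a b x : Set (X × X)}

theorem IsPFAlgebra.empty_mem (hF : IsPFAlgebra F) : (∅ : Set (X × X)) ∈ F := by
  obtain ⟨f, hf⟩ := hF.nonempty
  have hempty : f ∩ adom f = ∅ :=
    Set.eq_empty_iff_forall_notMem.mpr fun ⟨_, q⟩ ⟨hpq, hadom⟩ => (mem_adom.mp hadom).2 q hpq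
  exact hempty ▸ hF.inter_mem f hf _ (hF.adom_mem f hf)

theorem IsAtomOf.eq_of_inter_ne_empty (hF : IsPFAlgebra F) (ha : IsAtomOf F a)
    (hb : IsAtomOf F b) (hab : a ∩ b ≠ ∅) : a = b := by
  have hmem := hF.inter_mem a ha.1 b hb.1
  rw [← ha.2.2 _ hmem hab Set.inter_subset_left]
  exact hb.2.2 _ hmem hab Set.inter_subset_right

/-- An atom `x` lies entirely over the domain of any `g ∈ F` whose domain meets that of `x`. -/
theorem IsAtomOf.comp_adom_adom_eq (hF : IsPFAlgebra F) (hx : IsAtomOf F x) {g : Set (X × X)}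
    (hg : g ∈ F) {p q r : X} (hpq : (p, q) ∈ x) (hpr : (p, r) ∈ g) :
    comp (adom (adom g)) x = x := by
  refine hx.2.2 _ (hF.comp_mem _ (hF.adom_mem _ (hF.adom_mem _ hg)) x hx.1) ?_
    (comp_adom_subset x _)
  exact Set.nonempty_iff_ne_empty.mp ⟨(p, q), p, mem_adom_adom.mpr ⟨rfl, r, hpr⟩, hpq⟩

theorem isAtomOf_comp (hF : IsPFAlgebra F) (hx : IsAtomOf F x) (ha : a ∈ F)
    (hxa : comp x a ≠ ∅) : IsAtomOf F (comp x a) := by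
  refine ⟨hF.comp_mem x hx.1 a ha, hxa, fun g hg hg_ne hg_sub => hg_sub.antisymm ?_⟩
  obtain ⟨⟨p, q⟩, hpq⟩ := Set.nonempty_iff_ne_empty.mpr hg_ne
  obtain ⟨r, hpr, -⟩ := hg_sub hpq
  have hdom := hx.comp_adom_adom_eq hF hg hpr hpq
  rintro ⟨p', q'⟩ ⟨r', hpr', hrq'⟩
  obtain ⟨y, hy, -⟩ : (p', r') ∈ comp (adom (adom g)) x := by rwa [hdom]
  obtain ⟨rfl, q'', hq''⟩ := mem_adom_adom.mp hy
  obtain rfl := isPF_comp (hF.pf x hx.1) (hF.pf a ha) (hg_sub hq'') ⟨r', hpr', hrq'⟩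
  exact hq''

theorem isAtomOf_adom_adom (hF : IsPFAlgebra F) (hx : IsAtomOf F x) :
    IsAtomOf F (adom (adom x)) := by
  obtain ⟨⟨p, q⟩, hpq⟩ := Set.nonempty_iff_ne_empty.mpr hx.2.1
  refine ⟨hF.adom_mem _ (hF.adom_mem _ hx.1),
    Set.nonempty_iff_ne_empty.mp ⟨(p, p), mem_adom_adom.mpr ⟨rfl, q, hpq⟩⟩,
    fun g hg hg_ne hg_sub => hg_sub.antisymm ?_⟩
  obtain ⟨⟨p₀, q₀⟩, hpq₀⟩ := Set.nonempty_iff_ne_empty.mpr hg_ne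
  obtain ⟨rfl, r₀, hr₀⟩ := mem_adom_adom.mp (hg_sub hpq₀)
  have hdom := hx.comp_adom_adom_eq hF hg hr₀ hpq₀
  rintro ⟨p', q'⟩ hpq'
  obtain ⟨rfl, r, hr⟩ := mem_adom_adom.mp hpq'
  obtain ⟨y, hy, -⟩ : (p', r) ∈ comp (adom (adom g)) x := by rwa [hdom]
  obtain ⟨rfl, w, hw⟩ := mem_adom_adom.mp hy
  obtain ⟨rfl, -⟩ := mem_adom_adom.mp (hg_sub hw)
  exact hw

theorem IsAtomOf.comp_eq_comp_of_subset (hF : IsPFAlgebra F) (hx : IsAtomOf F x) (ha : a ∈ F)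
    (hb : b ∈ F) (hab : a ⊆ b) (hxa : comp x a ≠ ∅) : comp x a = comp x b :=
  (isAtomOf_comp hF hx hb (ne_bot_of_le_ne_bot hxa (comp_mono_right hab))).2.2 _
    (hF.comp_mem x hx.1 a ha) hxa (comp_mono_right hab)

theorem isLUBIn_atoms_subset (hF : IsPFAlgebra F) (hatomic : Atomic F) (ha : a ∈ F) :
    IsLUBIn F {c | IsAtomOf F c ∧ c ⊆ a} a := by
  refine ⟨ha, fun c hc => hc.2, fun u hu hub => ?_⟩
  -- `g` is the part of `a` outside the domain of `u ∩ a`; an atom below it would lie in `u`.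
  set g := comp (adom (u ∩ a)) a
  have hg_empty : g = ∅ := by
    by_contra hg_ne
    obtain ⟨c, hc, hcg⟩ :=
      hatomic g (hF.comp_mem _ (hF.adom_mem _ (hF.inter_mem u hu a ha)) a ha) hg_ne
    have hca := hcg.trans (comp_adom_subset a _)
    obtain ⟨⟨p, q⟩, hpq⟩ := Set.nonempty_iff_ne_empty.mpr hc.2.1
    obtain ⟨y, hy, -⟩ := hcg hpq
    exact (mem_adom.mp hy).2 q ⟨hub c ⟨hc, hca⟩ hpq, hca hpq⟩
  rintro ⟨p, q⟩ hpq
  obtain ⟨y, hyu, hya⟩ : ∃ y, (p, y) ∈ u ∩ a := by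
    by_contra! hno
    exact (hg_empty ▸ ⟨p, mem_adom.mpr ⟨rfl, hno⟩, hpq⟩ : (p, q) ∈ (∅ : Set (X × X)))
  obtain rfl := hF.pf a ha hya hpq
  exact hyu

theorem exists_comp_ne_empty_of_isLUBIn (hF : IsPFAlgebra F) (hdist : CompLeftDistribJoins F)
    (hx : x ∈ F) {S : Set (Set (X × X))} (hS : S ⊆ F) {m : Set (X × X)} (hm : IsLUBIn F S m)
    (hxm : comp x m ≠ ∅) : ∃ s ∈ S, comp x s ≠ ∅ := by
  by_contra! hall
  refine hxm (Set.subset_empty_iff.mp ((hdist x hx S hS m hm).2.2 ∅ hF.empty_mem ?_))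
  rintro _ ⟨s, hs, rfl⟩
  exact (hall s hs).subset

theorem IsAtomOf.exists_atom_subset_comp_ne_empty (hF : IsPFAlgebra F) (hatomic : Atomic F)
    (hdist : CompLeftDistribJoins F) (hx : IsAtomOf F x) (ha : a ∈ F) (hxa : comp x a ≠ ∅) :
    ∃ c, IsAtomOf F c ∧ c ⊆ a ∧ comp x c ≠ ∅ := by
  obtain ⟨c, ⟨hc, hca⟩, hxc⟩ := exists_comp_ne_empty_of_isLUBIn hF hdist hx.1
    (fun _ hc => hc.1.1) (isLUBIn_atoms_subset hF hatomic ha) hxa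
  exact ⟨c, hc, hca, hxc⟩

/-- The base `At(F)` of the representation. -/
abbrev Atoms (F : Set (Set (X × X))) := {c : Set (X × X) // IsAtomOf F c}

/-- `atomRep F a` is the graph of `θ(a)`: the atom `x` is sent to `x ∘ a` when that is nonempty. -/
def atomRep (F : Set (Set (X × X))) (a : Set (X × X)) : Set (Atoms F × Atoms F) :=
  {p | comp (p.1 : Set (X × X)) a ≠ ∅ ∧ (p.2 : Set (X × X)) = comp (p.1 : Set (X × X)) a}

theorem mem_atomRep {y z : Atoms F} :
    (y, z) ∈ atomRep F a ↔ comp (y : Set (X × X)) a ≠ ∅ ∧ (z : Set (X × X)) = comp y a :=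
  Iff.rfl

section AtomRep

variable (hF : IsPFAlgebra F)
include hF

theorem mk_mem_atomRep (y : Atoms F) (ha : a ∈ F) (hya : comp (y : Set (X × X)) a ≠ ∅) :
    (y, ⟨comp y a, isAtomOf_comp hF y.2 ha hya⟩) ∈ atomRep F a :=
  ⟨hya, rfl⟩

theorem atomRep_mono (ha : a ∈ F) (hb : b ∈ F) (hab : a ⊆ b) : atomRep F a ⊆ atomRep F b := by
  rintro ⟨y, z⟩ ⟨hya, hz⟩
  exact ⟨ne_bot_of_le_ne_bot hya (comp_mono_right hab),
    hz.trans (IsAtomOf.comp_eq_comp_of_subset hF y.2 ha hb hab hya)⟩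

theorem subset_of_atomRep_subset (hatomic : Atomic F) (ha : a ∈ F) (hb : b ∈ F)
    (hab : atomRep F a ⊆ atomRep F b) : a ⊆ b := by
  refine (isLUBIn_atoms_subset hF hatomic ha).2.2 b hb fun c ⟨hc, hca⟩ => ?_
  -- The domain `e` of `c` is an atom with `c ⊆ e ∘ a`, and `θ` forces `e ∘ a = e ∘ b`.
  set e : Atoms F := ⟨adom (adom c), isAtomOf_adom_adom hF hc⟩
  have hce : c ⊆ comp (e : Set (X × X)) a := subset_comp_adom_adom hca
  have hea : comp (e : Set (X × X)) a ≠ ∅ := ne_bot_of_le_ne_bot hc.2.1 hce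
  have heb := (hab (mk_mem_atomRep hF e ha hea)).2
  exact hce.trans (heb.trans_le (comp_adom_subset b _))

theorem injOn_atomRep (hatomic : Atomic F) : Set.InjOn (atomRep F) F := fun _ ha _ hb hab =>
  (subset_of_atomRep_subset hF hatomic ha hb hab.le).antisymm
    (subset_of_atomRep_subset hF hatomic hb ha hab.ge)

omit hF in
theorem isPF_atomRep (a : Set (X × X)) : IsPF (atomRep F a) :=
  fun _ _ _ hy hz => Subtype.ext (hy.2.trans hz.2.symm)

theorem atomRep_comp (ha : a ∈ F) (b : Set (X × X)) :
    atomRep F (comp a b) = comp (atomRep F a) (atomRep F b) := by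
  ext ⟨y, z⟩
  rw [mem_atomRep, ← comp_assoc]
  constructor
  · rintro ⟨hyab, hz⟩
    have hya : comp (y : Set (X × X)) a ≠ ∅ := by
      rintro hya
      exact hyab (by rw [hya, empty_comp])
    exact ⟨_, mk_mem_atomRep hF y ha hya, hyab, hz⟩
  · rintro ⟨w, ⟨-, hw⟩, hwb, hz⟩
    rw [hw] at hwb hz
    exact ⟨hwb, hz⟩

theorem atomRep_inter (ha : a ∈ F) (hb : b ∈ F) :
    atomRep F (a ∩ b) = atomRep F a ∩ atomRep F b := by
  have hab := hF.inter_mem a ha b hb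
  refine Set.subset_inter (atomRep_mono hF hab ha Set.inter_subset_left)
    (atomRep_mono hF hab hb Set.inter_subset_right) |>.antisymm ?_
  rintro ⟨y, z⟩ ⟨⟨hya, hza⟩, -, hzb⟩
  have hyab := IsPF.comp_inter_eq_of_comp_eq (hF.pf y y.2.1) (hza.symm.trans hzb)
  exact ⟨hyab ▸ hya, hyab ▸ hza⟩

theorem atomRep_adom (ha : a ∈ F) : atomRep F (adom a) = adom (atomRep F a) := by
  ext ⟨y, z⟩
  have hnot_mem : (∀ w, (y, w) ∉ atomRep F a) ↔ comp (y : Set (X × X)) a = ∅ :=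
    ⟨fun h => by_contra fun hya => h _ (mk_mem_atomRep hF y ha hya),
      fun hya _ hw => hw.1 hya⟩
  rw [mem_adom, hnot_mem, ← comp_adom_eq_self_iff, mem_atomRep]
  constructor
  · rintro ⟨hy, hz⟩
    have hyy := y.2.2.2 _ (hF.comp_mem _ y.2.1 _ (hF.adom_mem a ha)) hy
      (comp_adom_subset_left _ _)
    exact ⟨Subtype.ext (hz.trans hyy).symm, hyy⟩
  · rintro ⟨rfl, hyy⟩
    exact ⟨hyy.symm ▸ y.2.2.1, hyy.symm⟩

theorem atomRep_eq_iUnion_of_isLUBIn (hdist : CompLeftDistribJoins F)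
    {S : Set (Set (X × X))} (hS : S ⊆ F) {m : Set (X × X)} (hm : IsLUBIn F S m) :
    atomRep F m = ⋃ s ∈ S, atomRep F s := by
  refine Set.Subset.antisymm ?_
    (Set.iUnion₂_subset fun s hs => atomRep_mono hF (hS hs) hm.1 (hm.2.1 s hs))
  rintro ⟨y, z⟩ ⟨hym, hz⟩
  obtain ⟨s, hs, hys⟩ := exists_comp_ne_empty_of_isLUBIn hF hdist y.2.1 hS hm hym
  exact Set.mem_biUnion hs
    ⟨hys, hz.trans (IsAtomOf.comp_eq_comp_of_subset hF y.2 (hS hs) hm.1 (hm.2.1 s hs) hys).symm⟩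

theorem atomRep_eq_iInter_of_isGLBIn (hatomic : Atomic F) (hdist : CompLeftDistribJoins F)
    {S : Set (Set (X × X))} (hS : S ⊆ F) (hS_ne : S.Nonempty) {m : Set (X × X)}
    (hm : IsGLBIn F S m) : atomRep F m = ⋂ s ∈ S, atomRep F s := by
  refine Set.Subset.antisymm
    (Set.subset_iInter₂ fun s hs => atomRep_mono hF hm.1 (hS hs) (hm.2.1 s hs)) ?_
  rintro ⟨y, z⟩ hyz
  simp only [Set.mem_iInter] at hyz
  -- Each `s ∈ S` contains an atom `c` with `y ∘ c = z`; these atoms all coincide.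
  have hatom : ∀ s ∈ S, ∃ c, IsAtomOf F c ∧ c ⊆ s ∧ comp (y : Set (X × X)) c = z := by
    intro s hs
    obtain ⟨hys, hz⟩ := hyz s hs
    obtain ⟨c, hc, hcs, hyc⟩ :=
      IsAtomOf.exists_atom_subset_comp_ne_empty hF hatomic hdist y.2 (hS hs) hys
    exact ⟨c, hc, hcs, (IsAtomOf.comp_eq_comp_of_subset hF y.2 hc.1 (hS hs) hcs hyc).trans hz.symm⟩
  obtain ⟨s₀, hs₀⟩ := hS_ne
  obtain ⟨c₀, hc₀, hc₀s₀, hyc₀⟩ := hatom s₀ hs₀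
  have hc₀m : c₀ ⊆ m := hm.2.2 c₀ hc₀.1 fun s hs => by
    obtain ⟨c, hc, hcs, hyc⟩ := hatom s hs
    have hinter := IsPF.comp_inter_eq_of_comp_eq (hF.pf y y.2.1) (hyc₀.trans hyc.symm)
    have hne : c₀ ∩ c ≠ ∅ := fun h => z.2.2.1 (by rw [← hyc₀, ← hinter, h, comp_empty])
    exact (hc₀.eq_of_inter_ne_empty hF hc hne).trans_le hcs
  have hym : comp (y : Set (X × X)) m ≠ ∅ :=
    ne_bot_of_le_ne_bot (hyc₀ ▸ z.2.2.1) (comp_mono_right hc₀m)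
  exact ⟨hym, (hyz s₀ hs₀).2.trans
    (IsAtomOf.comp_eq_comp_of_subset hF y.2 hm.1 (hS hs₀) (hm.2.1 s₀ hs₀) hym).symm⟩

end AtomRep

end PFAlg

open PFAlg in
/-- if `F` is an atomic algebra of partial functions in which composition is
completely left-distributive over joins, then the map `θ` sending `a ∈ F` to the partial
function on `At(F)` given by `θ(a)(x) = x∘a` whenever `x∘a ≠ ∅` (undefined otherwise) is a
complete representation of `F` by partial functions with base `At(F)`. -/
theorem stmt15 {X : Type*} (F : Set (Set (X × X))) (hF : IsPFAlgebra F)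
    (hatomic : Atomic F) (hdist : CompLeftDistribJoins F)
    (θ : Set (X × X) → Set ({x : Set (X × X) // IsAtomOf F x} × {x : Set (X × X) // IsAtomOf F x}))
    (hθ : ∀ a, θ a = {p : {x : Set (X × X) // IsAtomOf F x} × {x : Set (X × X) // IsAtomOf F x} |
      comp (p.1 : Set (X × X)) a ≠ ∅ ∧ (p.2 : Set (X × X)) = comp (p.1 : Set (X × X)) a}) :
    IsRep F θ ∧ MeetComplete F θ ∧ JoinComplete F θ := by
  obtain rfl : θ = atomRep F := funext hθ
  exact ⟨⟨injOn_atomRep hF hatomic, fun a _ => isPF_atomRep a,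
      fun _ ha b _ => atomRep_comp hF ha b, fun _ ha _ hb => atomRep_inter hF ha hb,
      fun _ ha => atomRep_adom hF ha⟩,
    fun _ hS hS_ne _ hm => atomRep_eq_iInter_of_isGLBIn hF hatomic hdist hS hS_ne hm,
    fun _ hS _ hm => atomRep_eq_iUnion_of_isLUBIn hF hdist hS hm⟩
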